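/- For fixed j ∈ ℕ, the normalized associated Legendre values satisfy lim_{m→∞} |P̃_{j+2m}^j(0)|² = 1/π². -/

import Mathlib

/-!
With `D m = (2m-1)‼ / (2m)‼` we have `|P̃_{j+2m}^j(0)|² = (4m+2j+1)/(4π) · D m · D (m+j)`.
Since `(2m+1) · D m ²` is the reciprocal of the `m`-th partial Wallis product, which tends to
`π/2`, we get `D m ~ (π m)^{-1/2}`, so `|P̃_{j+2m}^j(0)|² ~ 4m/(4π) · 1/(π m) = 1/π²`.
-/

open Real Filter

/-- The square `|P̃_n^j(0)|²` of the normalized associated Legendre function at zero,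
for `n + j` even. -/
noncomputable def ptildeSq (n j : ℕ) : ℝ :=
  (2 * n + 1) / (4 * Real.pi) *
    ((Nat.doubleFactorial (n - j - 1) * Nat.doubleFactorial (n + j - 1) : ℝ) /
      (Nat.doubleFactorial (n - j) * Nat.doubleFactorial (n + j) : ℝ))

open Topology
open scoped Nat

noncomputable def doubleFactorialRatio (m : ℕ) : ℝ :=
  ((2 * m - 1)‼ : ℝ) / ((2 * m)‼ : ℝ)

lemma Nat.doubleFactorial_two_mul_mul_doubleFactorial_two_mul_sub_one (m : ℕ) :
    (2 * m)‼ * (2 * m - 1)‼ = (2 * m)! := by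
  cases m with
  | zero => rfl
  | succ m =>
    rw [show 2 * (m + 1) = 2 * m + 1 + 1 by ring, Nat.factorial_eq_mul_doubleFactorial]
    rfl

lemma two_mul_add_one_mul_doubleFactorialRatio_sq (m : ℕ) :
    (2 * m + 1) * doubleFactorialRatio m ^ 2 = (Wallis.W m)⁻¹ := by
  have hfact : ((2 * m)! : ℝ) = (2 * m)‼ * (2 * m - 1)‼ := by
    exact_mod_cast (Nat.doubleFactorial_two_mul_mul_doubleFactorial_two_mul_sub_one m).symm
  have heven : ((2 * m)‼ : ℝ) = 2 ^ m * m ! := by exact_mod_cast Nat.doubleFactorial_two_mul m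
  rw [Wallis.W_eq_factorial_ratio, doubleFactorialRatio, hfact, heven, pow_mul']
  field_simp

lemma ptildeSq_nonneg (n j : ℕ) : 0 ≤ ptildeSq n j := by
  unfold ptildeSq
  positivity

lemma ptildeSq_add_two_mul (j m : ℕ) :
    ptildeSq (j + 2 * m) j =
      (2 * (j + 2 * m) + 1) / (4 * π) *
        (doubleFactorialRatio m * doubleFactorialRatio (m + j)) := by
  rw [ptildeSq, doubleFactorialRatio, doubleFactorialRatio, div_mul_div_comm,
    show j + 2 * m - j = 2 * m by omega, show j + 2 * m + j = 2 * (m + j) by omega]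
  push_cast
  ring

lemma ptildeSq_add_two_mul_sq (j m : ℕ) :
    ptildeSq (j + 2 * m) j ^ 2 =
      (4 * π)⁻¹ ^ 2 * ((2 * j + 1 + 4 * m) / (1 + 2 * m)) *
        ((2 * j + 1 + 4 * m) / (2 * j + 1 + 2 * m)) *
        (Wallis.W m)⁻¹ * (Wallis.W (m + j))⁻¹ := by
  rw [ptildeSq_add_two_mul, ← two_mul_add_one_mul_doubleFactorialRatio_sq,
    ← two_mul_add_one_mul_doubleFactorialRatio_sq]
  push_cast
  field_simp
  ring

lemma Filter.Tendsto.of_sq {α : Type*} {l : Filter α} {f : α → ℝ} {x : ℝ}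
    (hf : ∀ a, 0 ≤ f a) (hx : 0 ≤ x) (h : Tendsto (fun a => f a ^ 2) l (𝓝 (x ^ 2))) :
    Tendsto f l (𝓝 x) := by
  simpa only [sqrt_sq hx, sqrt_sq (hf _)] using h.sqrt

theorem ptildeSq_limit (j : ℕ) :
    Tendsto (fun m : ℕ => ptildeSq (j + 2 * m) j) atTop (nhds (1 / Real.pi ^ 2)) := by
  refine Tendsto.of_sq (fun m => ptildeSq_nonneg _ _) (by positivity) ?_
  have hW : Tendsto (fun m => (Wallis.W m)⁻¹) atTop (𝓝 (π / 2)⁻¹) :=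
    Wallis.tendsto_W_nhds_pi_div_two.inv₀ (by positivity)
  have hratio (b : ℝ) :
      Tendsto (fun m : ℕ => (2 * j + 1 + 4 * m) / (b + 2 * m)) atTop (𝓝 2) := by
    convert tendsto_add_mul_div_add_mul_atTop_nhds (2 * j + 1 : ℝ) b 4 two_ne_zero using 2
    norm_num
  have hlim := ((((tendsto_const_nhds (x := (4 * π)⁻¹ ^ 2)).mul (hratio 1)).mul
    (hratio (2 * j + 1))).mul hW).mul (hW.comp (tendsto_add_atTop_nat j))
  convert hlim using 1
  · exact funext (ptildeSq_add_two_mul_sq j)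
  · congr 1
    field_simp
    norm_num
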